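/- The explicit matrix ψ(t,k) of the single-exponential background satisfies the background ODE ψ_t + 2ik²σ₃ψ = V^b ψ with ψ(0,k) = I, where V^b(t,k) has entries V₁₁ = -iλα², V₁₂ = (2kα + ic)e^{iωt}, V₂₁ = (2λkα - iλ·conj(c))e^{-iωt}, V₂₂ = iλα². -/

import Mathlib

open Complex Matrix

/-!
Write `B = 4k² + 2λα² + ω`, `p = 2αk + ic`, `q = 2αk - i c̄` and let `A` be the traceless matrix
`[[B/(2i), p], [λq, -B/(2i)]]`. The dispersion relation says exactly `det A = Ω²`, so by
Cayley–Hamilton `A² = -Ω²`, and hence `M(t) = cos(tΩ) + sin(tΩ)/Ω · A` solves `M' = A M`. The explicit `ψ` is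
`e^{tD} M(t)` with `D = (iω/2) σ₃`, so `ψ' = (D + e^{tD} A e^{-tD}) ψ`, and conjugating `A` by the
diagonal phase `e^{tD}` turns `D + e^{tD} A e^{-tD}` into `V^b(t) - 2ik²σ₃`.
-/

-- Any norm gives the same derivatives; this one makes square matrices a normed algebra.
attribute [local instance] Matrix.linftyOpNormedAddCommGroup Matrix.linftyOpNormedSpace
  Matrix.linftyOpNormedRing Matrix.linftyOpNormedAlgebra

theorem HasDerivAt.matrix_elem {m n : Type*} [Fintype m] [Fintype n]
    {f : ℝ → Matrix m n ℂ} {f' : Matrix m n ℂ} {t : ℝ}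
    (h : HasDerivAt f f' t) (i : m) (j : n) : HasDerivAt (fun s => f s i j) (f' i j) t :=
  hasDerivAt_pi.1 (hasDerivAt_pi.1 h i) j

theorem Matrix.mul_self_fin_two_traceless {R : Type*} [CommRing R] (a b c : R) :
    !![a, b; c, -a] * !![a, b; c, -a] = (a ^ 2 + b * c) • 1 := by
  ext i j; fin_cases i <;> fin_cases j <;> simp [Matrix.mul_apply, sq] <;> ring

section

variable {n : Type*} [Fintype n] [DecidableEq n]

noncomputable def expDiagonal (d : n → ℂ) (t : ℝ) : Matrix n n ℂ :=
  diagonal fun i => exp (d i * t)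

theorem hasDerivAt_expDiagonal (d : n → ℂ) (t : ℝ) :
    HasDerivAt (expDiagonal d) (diagonal d * expDiagonal d t) t := by
  unfold expDiagonal
  rw [diagonal_mul_diagonal]
  refine hasDerivAt_pi.2 fun i => hasDerivAt_pi.2 fun j => ?_
  rcases eq_or_ne i j with rfl | hij
  · simpa [mul_comm] using ((hasDerivAt_id t).ofReal_comp.const_mul (d i)).cexp
  · simpa [diagonal_apply_ne _ hij] using hasDerivAt_const t (0 : ℂ)

noncomputable def cosSinMatrix (A : Matrix n n ℂ) (Ω : ℂ) (t : ℝ) : Matrix n n ℂ :=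
  cos (t * Ω) • 1 + (sin (t * Ω) / Ω) • A

theorem hasDerivAt_cosSinMatrix {A : Matrix n n ℂ} {Ω : ℂ} (hΩ : Ω ≠ 0)
    (hA : A * A = -Ω ^ 2 • 1) (t : ℝ) :
    HasDerivAt (cosSinMatrix A Ω) (A * cosSinMatrix A Ω t) t := by
  have hlin : HasDerivAt (fun s : ℝ => (s : ℂ) * Ω) Ω t := by
    simpa using (hasDerivAt_id t).ofReal_comp.mul_const Ω
  have hcos := (hasDerivAt_cos _).comp t hlin
  have hsin := ((hasDerivAt_sin _).comp t hlin).div_const Ω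
  refine ((hcos.smul_const (1 : Matrix n n ℂ)).add (hsin.smul_const A)).congr_deriv ?_
  simp only [cosSinMatrix, mul_add, Matrix.mul_smul, hA, mul_one, smul_smul]
  field_simp
  exact add_comm _ _

theorem hasDerivAt_expDiagonal_mul {d : n → ℂ} {M : ℝ → Matrix n n ℂ} {A W : Matrix n n ℂ}
    {t : ℝ} (hM : HasDerivAt M (A * M t) t)
    (hgauge : diagonal d * expDiagonal d t + expDiagonal d t * A = W * expDiagonal d t) :
    HasDerivAt (fun s => expDiagonal d s * M s) (W * (expDiagonal d t * M t)) t := by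
  refine ((hasDerivAt_expDiagonal d t).mul hM).congr_deriv ?_
  rw [← mul_assoc, ← mul_assoc, ← hgauge, add_mul]

end

noncomputable def backgroundSymbol (α ω lam : ℝ) (c k : ℂ) : Matrix (Fin 2) (Fin 2) ℂ :=
  let B : ℂ := 4 * k ^ 2 + 2 * (lam : ℂ) * (α : ℂ) ^ 2 + (ω : ℂ)
  !![B / (2 * I), 2 * α * k + I * c; lam * (2 * α * k - I * starRingEnd ℂ c), -(B / (2 * I))]

theorem backgroundSymbol_mul_self {α ω lam : ℝ} {c k Ω : ℂ}
    (hΩ : Ω ^ 2 = 4 * k ^ 4 + 2 * (ω : ℂ) * k ^ 2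
        + 4 * (lam : ℂ) * (α : ℂ) * (c.im : ℂ) * k
        + ((ω / 2 + lam * α ^ 2 : ℝ) : ℂ) ^ 2 - (lam : ℂ) * (‖c‖ : ℂ) ^ 2) :
    backgroundSymbol α ω lam c k * backgroundSymbol α ω lam c k = -Ω ^ 2 • 1 := by
  rw [backgroundSymbol, Matrix.mul_self_fin_two_traceless]
  congr 1
  have hc : ((‖c‖ : ℝ) : ℂ) ^ 2 = c * starRingEnd ℂ c := by
    rw [← ofReal_pow, Complex.sq_norm, mul_conj]
  have hsub : c - starRingEnd ℂ c = 2 * (c.im : ℂ) * I := by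
    simpa using sub_conj c
  push_cast at hΩ
  rw [div_pow, mul_pow, I_sq]
  field_simp
  linear_combination (4 : ℂ) * hΩ - 4 * (lam : ℂ) * hc + 8 * I * (lam : ℂ) * (α : ℂ) * k * hsub
    - (-16 * k * (lam : ℂ) * (α : ℂ) * (c.im : ℂ) + 4 * (lam : ℂ) * c * starRingEnd ℂ c) * I_sq

theorem background_eigenfunction_solves_ODE_general (α ω lam : ℝ)
    (c : ℂ) (k Ω : ℂ) (hΩne : Ω ≠ 0)
    (hΩ : Ω ^ 2 = 4 * k ^ 4 + 2 * (ω : ℂ) * k ^ 2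
        + 4 * (lam : ℂ) * (α : ℂ) * (c.im : ℂ) * k
        + ((ω / 2 + lam * α ^ 2 : ℝ) : ℂ) ^ 2 - (lam : ℂ) * (‖c‖ : ℂ) ^ 2)
    (ψ Vb : ℝ → Matrix (Fin 2) (Fin 2) ℂ)
    (hψ : ψ = fun (t : ℝ) =>
      !![Complex.exp (Complex.I * ω * (t : ℂ) / 2) *
            (Complex.cos ((t : ℂ) * Ω) + (4 * k ^ 2 + 2 * (lam : ℂ) * (α : ℂ) ^ 2 + (ω : ℂ))
              / (2 * Complex.I * Ω) * Complex.sin ((t : ℂ) * Ω)),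
          Complex.exp (Complex.I * ω * (t : ℂ) / 2) *
            ((2 * (α : ℂ) * k + Complex.I * c) * Complex.sin ((t : ℂ) * Ω) / Ω);
          Complex.exp (-(Complex.I * ω * (t : ℂ) / 2)) *
            ((lam : ℂ) * (2 * (α : ℂ) * k - Complex.I * starRingEnd ℂ c)
              * Complex.sin ((t : ℂ) * Ω) / Ω),
          Complex.exp (-(Complex.I * ω * (t : ℂ) / 2)) *
            (Complex.cos ((t : ℂ) * Ω) - (4 * k ^ 2 + 2 * (lam : ℂ) * (α : ℂ) ^ 2 + (ω : ℂ))
              / (2 * Complex.I * Ω) * Complex.sin ((t : ℂ) * Ω))])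
    (hVb : Vb = fun (t : ℝ) =>
      !![-Complex.I * (lam : ℂ) * (α : ℂ) ^ 2,
          (2 * k * (α : ℂ) + Complex.I * c) * Complex.exp (Complex.I * ω * t);
          (2 * (lam : ℂ) * k * (α : ℂ) - Complex.I * (lam : ℂ) * starRingEnd ℂ c)
            * Complex.exp (-(Complex.I * ω * t)),
          Complex.I * (lam : ℂ) * (α : ℂ) ^ 2]) :
    ψ 0 = 1 ∧
    ∀ t : ℝ, ∀ i j : Fin 2,
      deriv (fun s => ψ s i j) t
        + 2 * Complex.I * k ^ 2 * ((!![(1 : ℂ), 0; 0, -1] * ψ t) i j)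
      = (Vb t * ψ t) i j := by
  set d : Fin 2 → ℂ := ![I * ω / 2, -(I * ω / 2)]
  have hψ_eq : ψ = fun t => expDiagonal d t * cosSinMatrix (backgroundSymbol α ω lam c k) Ω t := by
    ext t i j
    fin_cases i <;> fin_cases j <;>
      simp [hψ, expDiagonal, cosSinMatrix, d, backgroundSymbol, Matrix.mul_apply] <;> ring_nf
  have hgauge : ∀ t, diagonal d * expDiagonal d t + expDiagonal d t * backgroundSymbol α ω lam c k
      = (Vb t - (2 * I * k ^ 2) • !![(1 : ℂ), 0; 0, -1]) * expDiagonal d t := by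
    intro t
    have hsq : exp (I * ω * t) = exp (I * ω / 2 * t) ^ 2 := by rw [← exp_nat_mul]; ring_nf
    ext i j
    fin_cases i <;> fin_cases j <;>
      simp [hVb, expDiagonal, d, backgroundSymbol, Matrix.mul_apply, exp_neg, hsq] <;>
      field_simp <;> rw [I_sq] <;> ring
  refine ⟨by simp [hψ_eq, expDiagonal, cosSinMatrix], fun t i j => ?_⟩
  have hψ' := hasDerivAt_expDiagonal_mul
    (hasDerivAt_cosSinMatrix hΩne (backgroundSymbol_mul_self hΩ) t) (hgauge t)
  simp only [hψ_eq]
  rw [(hψ'.matrix_elem i j).deriv, sub_mul, smul_mul_assoc, Matrix.sub_apply, Matrix.smul_apply,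
    smul_eq_mul, sub_add_cancel]

/-- The explicit single-exponential background eigenfunction
`ψ(t,k) = e^{(iω/2)tσ₃} M(t,k)` satisfies `ψ_t + 2ik²σ₃ψ = V^b ψ` with `ψ(0,k) = I`. -/
theorem background_eigenfunction_solves_ODE (α ω lam : ℝ) (hα : 0 < α)
    (hlam : lam = 1 ∨ lam = -1) (c : ℂ) (k Ω : ℂ) (hΩne : Ω ≠ 0)
    (hΩ : Ω ^ 2 = 4 * k ^ 4 + 2 * (ω : ℂ) * k ^ 2
        + 4 * (lam : ℂ) * (α : ℂ) * (c.im : ℂ) * k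
        + ((ω / 2 + lam * α ^ 2 : ℝ) : ℂ) ^ 2 - (lam : ℂ) * (‖c‖ : ℂ) ^ 2)
    (ψ Vb : ℝ → Matrix (Fin 2) (Fin 2) ℂ)
    (hψ : ψ = fun (t : ℝ) =>
      !![Complex.exp (Complex.I * ω * (t : ℂ) / 2) *
            (Complex.cos ((t : ℂ) * Ω) + (4 * k ^ 2 + 2 * (lam : ℂ) * (α : ℂ) ^ 2 + (ω : ℂ))
              / (2 * Complex.I * Ω) * Complex.sin ((t : ℂ) * Ω)),
          Complex.exp (Complex.I * ω * (t : ℂ) / 2) *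
            ((2 * (α : ℂ) * k + Complex.I * c) * Complex.sin ((t : ℂ) * Ω) / Ω);
          Complex.exp (-(Complex.I * ω * (t : ℂ) / 2)) *
            ((lam : ℂ) * (2 * (α : ℂ) * k - Complex.I * starRingEnd ℂ c)
              * Complex.sin ((t : ℂ) * Ω) / Ω),
          Complex.exp (-(Complex.I * ω * (t : ℂ) / 2)) *
            (Complex.cos ((t : ℂ) * Ω) - (4 * k ^ 2 + 2 * (lam : ℂ) * (α : ℂ) ^ 2 + (ω : ℂ))
              / (2 * Complex.I * Ω) * Complex.sin ((t : ℂ) * Ω))])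
    (hVb : Vb = fun (t : ℝ) =>
      !![-Complex.I * (lam : ℂ) * (α : ℂ) ^ 2,
          (2 * k * (α : ℂ) + Complex.I * c) * Complex.exp (Complex.I * ω * t);
          (2 * (lam : ℂ) * k * (α : ℂ) - Complex.I * (lam : ℂ) * starRingEnd ℂ c)
            * Complex.exp (-(Complex.I * ω * t)),
          Complex.I * (lam : ℂ) * (α : ℂ) ^ 2]) :
    ψ 0 = 1 ∧
    ∀ t : ℝ, ∀ i j : Fin 2,
      deriv (fun s => ψ s i j) t
        + 2 * Complex.I * k ^ 2 * ((!![(1 : ℂ), 0; 0, -1] * ψ t) i j)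
      = (Vb t * ψ t) i j :=
  background_eigenfunction_solves_ODE_general α ω lam c k Ω hΩne hΩ ψ Vb hψ hVb
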